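/- Let S be a nonleaf vertex of a dissection tree of G with children S' and S'' and suppose below(S') and below(S'') are dissected by S. For nodes u, v in below(S) and integer i ≥ 1, the minimum weight d_{S,i}(u,v) of an (S,i)-path between u and v in G[below(S)] satisfies the recurrence d_{S,i}(u,v) = min over y ∈ S ∪ {v} of (d_{S,i−1}(u,y) + d_{S,0}(y,v)), where d_{S,0}(u,v) = min{d_{S'}(u,v), d_{S''}(u,v)} for u ≠ v and d_{S,0}(u,u) = 0. -/

import Mathlib

open SimpleGraph

variable {V : Type*}

/-- The weight of a walk: the sum of the weights of its edges. -/
def walkWeight {G : SimpleGraph V} (w : Sym2 V → ℕ) {u v : V} (p : G.Walk u v) : ℕ :=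
  (p.edges.map w).sum

/-- Node sets `V₁` and `V₂` are dissected by `S` in `G` if no node of `V₁ \ S`
is adjacent to a node of `V₂ \ S`. -/
def Dissects (G : SimpleGraph V) (S V₁ V₂ : Set V) : Prop :=
  ∀ a ∈ V₁ \ S, ∀ b ∈ V₂ \ S, ¬ G.Adj a b

/-- The distance in the subgraph of `G` induced by `A`: the minimum weight of a walk
from `u` to `v` whose support lies in `A` (`⊤` if there is none). -/
noncomputable def dIn (G : SimpleGraph V) (w : Sym2 V → ℕ) (A : Set V) (u v : V) : ℕ∞ :=
  sInf {n : ℕ∞ | ∃ p : G.Walk u v, {a | a ∈ p.support} ⊆ A ∧ n = (walkWeight w p : ℕ∞)}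

/-- `SWalk G B₁ B₂ k p`: the walk `p` is an `(S,k)`-path, where `B₁ = below(S')` and
`B₂ = below(S'')` are the two sides of `S`.  An `(S,0)`-path lies entirely in one of
the two sides; an `(S,k)`-path is an `(S,k-1)`-path followed by an `(S,0)`-path. -/
inductive SWalk (G : SimpleGraph V) (B₁ B₂ : Set V) : ℕ → ∀ {u v : V}, G.Walk u v → Prop
  | zero {u v : V} (p : G.Walk u v) :
      ({a | a ∈ p.support} ⊆ B₁ ∨ {a | a ∈ p.support} ⊆ B₂) → SWalk G B₁ B₂ 0 p
  | succ {k : ℕ} {u y v : V} (q : G.Walk u y) (r : G.Walk y v) :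
      SWalk G B₁ B₂ k q → ({a | a ∈ r.support} ⊆ B₁ ∨ {a | a ∈ r.support} ⊆ B₂) →
      SWalk G B₁ B₂ (k + 1) (q.append r)

/-- `d_{S,k}(u,v)`: the minimum weight of an `(S,k)`-path between `u` and `v`. -/
noncomputable def dSk (G : SimpleGraph V) (w : Sym2 V → ℕ) (B₁ B₂ : Set V) (k : ℕ)
    (u v : V) : ℕ∞ :=
  sInf {n : ℕ∞ | ∃ p : G.Walk u v, SWalk G B₁ B₂ k p ∧ n = (walkWeight w p : ℕ∞)}

/-!
An `(S,k+1)`-path is an `(S,k)`-path `q` to some `y` followed by a one-sided walk `r`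
from `y` to `v`; the point is that `y` can be moved into `S ∪ {v}`.  If `y ∉ S ∪ {v}`,
let `z` be the vertex after `y` on `r`.  When `z ∈ S`, the edge `yz` can be moved onto the
last block of `q`, whose side contains `S`.  When `z ∉ S`, the last block of `q` and `r` lie
on the same side, because `y, z ∉ S` are adjacent and the sides are dissected by `S`;
then all of `r` can be merged into that block.
-/

namespace SimpleGraph.Walk

variable {G : SimpleGraph V}

lemma support_append_subset {B : Set V} {u y v : V} {p : G.Walk u y} {q : G.Walk y v}
    (hp : {a | a ∈ p.support} ⊆ B) (hq : {a | a ∈ q.support} ⊆ B) :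
    {a | a ∈ (p.append q).support} ⊆ B :=
  fun _ ha => (mem_support_append_iff p q).mp ha |>.elim (hp ·) (hq ·)

end SimpleGraph.Walk

open SimpleGraph.Walk

section SWalk

variable {G : SimpleGraph V} {S B₁ B₂ : Set V}

lemma walkWeight_append (w : Sym2 V → ℕ) {u y v : V} (p : G.Walk u y) (q : G.Walk y v) :
    walkWeight w (p.append q) = walkWeight w p + walkWeight w q := by
  simp [walkWeight, Walk.edges_append]

def IsSideWalk (B₁ B₂ : Set V) {u v : V} (p : G.Walk u v) : Prop :=
  {a | a ∈ p.support} ⊆ B₁ ∨ {a | a ∈ p.support} ⊆ B₂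

lemma sWalk_zero_iff {u v : V} {p : G.Walk u v} :
    SWalk G B₁ B₂ 0 p ↔ IsSideWalk B₁ B₂ p :=
  ⟨fun | .zero _ h => h, SWalk.zero p⟩

lemma isSideWalk_nil {u : V} (hu : u ∈ B₁ ∪ B₂) :
    IsSideWalk B₁ B₂ (Walk.nil : G.Walk u u) :=
  hu.imp (fun h => by simpa using h) (fun h => by simpa using h)

lemma IsSideWalk.concat_of_mem (hS : S ⊆ B₁ ∩ B₂) {u y z : V} {p : G.Walk u y}
    (hp : IsSideWalk B₁ B₂ p) (h : G.Adj y z) (hz : z ∈ S) :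
    IsSideWalk B₁ B₂ (p.concat h) := by
  have key {B : Set V} (hSB : S ⊆ B) (hp : {a | a ∈ p.support} ⊆ B) :
      {a | a ∈ (p.concat h).support} ⊆ B := by
    rw [concat_eq_append]
    refine support_append_subset hp fun a ha => ?_
    simp only [Set.mem_ofPred_eq, support_cons, support_nil, List.mem_cons,
      List.not_mem_nil, or_false] at ha
    rcases ha with rfl | rfl
    exacts [hp (end_mem_support p), hSB hz]
  exact hp.imp (key fun _ ha => (hS ha).1) (key fun _ ha => (hS ha).2)

lemma IsSideWalk.append_of_adj (hdis : Dissects G S B₁ B₂) {u y z v : V} {p : G.Walk u y}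
    (hp : IsSideWalk B₁ B₂ p) (h : G.Adj y z) {r : G.Walk z v}
    (hr : IsSideWalk B₁ B₂ (cons h r)) (hy : y ∉ S) (hz : z ∉ S) :
    IsSideWalk B₁ B₂ (p.append (cons h r)) := by
  have hzr : z ∈ (cons h r).support := by simp
  rcases hp with hp | hp <;> rcases hr with hr | hr
  · exact .inl (support_append_subset hp hr)
  · exact absurd h (hdis y ⟨hp (end_mem_support p), hy⟩ z ⟨hr hzr, hz⟩)
  · exact absurd h.symm (hdis z ⟨hr hzr, hz⟩ y ⟨hp (end_mem_support p), hy⟩)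
  · exact .inr (support_append_subset hp hr)

/-- Appending to an `(S,k)`-path only touches its last one-sided block. -/
lemma SWalk.append_of_forall {k : ℕ} {u y t : V} {q : G.Walk u y}
    (hq : SWalk G B₁ B₂ k q) (s : G.Walk y t)
    (hs : ∀ {x : V} (b : G.Walk x y),
      IsSideWalk B₁ B₂ b → IsSideWalk B₁ B₂ (b.append s)) :
    SWalk G B₁ B₂ k (q.append s) := by
  cases hq with
  | zero _ hp => exact .zero _ (hs q hp)
  | succ q₀ r hq₀ hr =>
    rw [← append_assoc]
    exact .succ q₀ (r.append s) hq₀ (hs r hr)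

lemma SWalk.exists_append_eq_of_notMem (hS : S ⊆ B₁ ∩ B₂) (hdis : Dissects G S B₁ B₂)
    {k : ℕ} {u y v : V} {q : G.Walk u y} {r : G.Walk y v} (hq : SWalk G B₁ B₂ k q)
    (hr : IsSideWalk B₁ B₂ r) (hy : y ∉ insert v S) :
    ∃ y' ∈ insert v S, ∃ (q' : G.Walk u y') (r' : G.Walk y' v),
      SWalk G B₁ B₂ k q' ∧ IsSideWalk B₁ B₂ r' ∧ q'.append r' = q.append r := by
  obtain ⟨hyv, hyS⟩ := not_or.mp hy
  cases r with
  | nil => exact absurd rfl hyv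
  | @cons _ z _ h r =>
    by_cases hz : z ∈ S
    · refine ⟨z, .inr hz, q.concat h, r, ?_, ?_, concat_append q h r⟩
      · rw [concat_eq_append]
        exact hq.append_of_forall _ fun b hb => by
          simpa only [concat_eq_append] using hb.concat_of_mem hS h hz
      · exact hr.imp (fun hr _ ha => hr (List.mem_cons_of_mem _ ha))
          (fun hr _ ha => hr (List.mem_cons_of_mem _ ha))
    · refine ⟨v, .inl rfl, q.append (cons h r), .nil, ?_, ?_, append_nil _⟩
      · exact hq.append_of_forall _ fun b hb => hb.append_of_adj hdis h hr hyS hz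
      · exact isSideWalk_nil (hr.imp (· (end_mem_support _)) (· (end_mem_support _)))

lemma SWalk.exists_append_eq (hS : S ⊆ B₁ ∩ B₂) (hdis : Dissects G S B₁ B₂)
    {k : ℕ} {u v : V} {p : G.Walk u v} (hp : SWalk G B₁ B₂ (k + 1) p) :
    ∃ y ∈ insert v S, ∃ (q : G.Walk u y) (r : G.Walk y v),
      SWalk G B₁ B₂ k q ∧ IsSideWalk B₁ B₂ r ∧ q.append r = p := by
  cases hp with
  | @succ _ _ y _ q r hq hr =>
    by_cases hy : y ∈ insert v S
    · exact ⟨_, hy, q, r, hq, hr, rfl⟩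
    · exact hq.exists_append_eq_of_notMem hS hdis hr hy

end SWalk

section Distances

variable {G : SimpleGraph V} (w : Sym2 V → ℕ) {S B₁ B₂ : Set V}

lemma dSk_le {k : ℕ} {u v : V} {p : G.Walk u v} (hp : SWalk G B₁ B₂ k p) :
    dSk G w B₁ B₂ k u v ≤ walkWeight w p :=
  sInf_le ⟨p, hp, rfl⟩

lemma dSk_zero_self {u : V} (hu : u ∈ B₁ ∪ B₂) : dSk G w B₁ B₂ 0 u u = 0 :=
  nonpos_iff_eq_zero.mp <|
    (dSk_le w (.zero .nil (isSideWalk_nil hu))).trans_eq (by simp [walkWeight])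

lemma dSk_zero_eq_min (u v : V) :
    dSk G w B₁ B₂ 0 u v = min (dIn G w B₁ u v) (dIn G w B₂ u v) := by
  rw [dSk, dIn, dIn, ← sInf_union]
  congr 1
  ext n
  simp only [Set.mem_ofPred_eq, Set.mem_union, sWalk_zero_iff, IsSideWalk]
  constructor
  · rintro ⟨p, hp | hp, rfl⟩
    exacts [.inl ⟨p, hp, rfl⟩, .inr ⟨p, hp, rfl⟩]
  · rintro (⟨p, hp, rfl⟩ | ⟨p, hp, rfl⟩)
    exacts [⟨p, .inl hp, rfl⟩, ⟨p, .inr hp, rfl⟩]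

lemma dSk_succ_le_add (k : ℕ) (u y v : V) :
    dSk G w B₁ B₂ (k + 1) u v ≤ dSk G w B₁ B₂ k u y + dSk G w B₁ B₂ 0 y v := by
  conv_rhs => rw [dSk, dSk, sInf_eq_iInf, sInf_eq_iInf]
  refine ENat.le_iInf₂_add_iInf₂ ?_
  rintro _ ⟨q, hq, rfl⟩ _ ⟨r, hr, rfl⟩
  calc dSk G w B₁ B₂ (k + 1) u v ≤ walkWeight w (q.append r) :=
        dSk_le w (.succ q r hq (sWalk_zero_iff.mp hr))
    _ = walkWeight w q + walkWeight w r := by rw [walkWeight_append, Nat.cast_add]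

lemma dSk_succ_eq (hS : S ⊆ B₁ ∩ B₂) (hdis : Dissects G S B₁ B₂) (k : ℕ) (u v : V) :
    dSk G w B₁ B₂ (k + 1) u v =
      ⨅ y ∈ insert v S, dSk G w B₁ B₂ k u y + dSk G w B₁ B₂ 0 y v := by
  refine le_antisymm (le_iInf₂ fun y _ => dSk_succ_le_add w k u y v) (le_sInf ?_)
  rintro _ ⟨p, hp, rfl⟩
  obtain ⟨y, hy, q, r, hq, hr, rfl⟩ := hp.exists_append_eq hS hdis
  calc ⨅ y ∈ insert v S, dSk G w B₁ B₂ k u y + dSk G w B₁ B₂ 0 y v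
      ≤ dSk G w B₁ B₂ k u y + dSk G w B₁ B₂ 0 y v := iInf₂_le y hy
    _ ≤ walkWeight w q + walkWeight w r :=
        add_le_add (dSk_le w hq) (dSk_le w (.zero r hr))
    _ = walkWeight w (q.append r) := by rw [walkWeight_append, Nat.cast_add]

end Distances

/-- Let `S` be a nonleaf vertex of a dissection tree of `G` with
children `S'`, `S''`, where `B₁ = below(S')` and `B₂ = below(S'')` are dissected by
`S`.  For nodes `u, v ∈ below(S) = B₁ ∪ B₂` and `i ≥ 1`, the minimum weight
`d_{S,i}(u,v)` of an `(S,i)`-path between `u` and `v` satisfies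
`d_{S,i}(u,v) = min_{y ∈ S ∪ {v}} (d_{S,i-1}(u,y) + d_{S,0}(y,v))`, where
`d_{S,0}(u,v) = min{d_{S'}(u,v), d_{S''}(u,v)}` for `u ≠ v` and `d_{S,0}(u,u) = 0`. -/
theorem dSk_recurrence {V : Type*} (G : SimpleGraph V) (w : Sym2 V → ℕ)
    (S B₁ B₂ : Set V) (hS : S ⊆ B₁ ∩ B₂) (hdis : Dissects G S B₁ B₂) :
    (∀ u ∈ B₁ ∪ B₂, dSk G w B₁ B₂ 0 u u = 0) ∧
    (∀ u v : V, u ≠ v →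
      dSk G w B₁ B₂ 0 u v = min (dIn G w B₁ u v) (dIn G w B₂ u v)) ∧
    (∀ i : ℕ, 1 ≤ i → ∀ u ∈ B₁ ∪ B₂, ∀ v ∈ B₁ ∪ B₂,
      dSk G w B₁ B₂ i u v =
        ⨅ y ∈ insert v S, dSk G w B₁ B₂ (i - 1) u y + dSk G w B₁ B₂ 0 y v) := by
  refine ⟨fun u hu => dSk_zero_self w hu, fun u v _ => dSk_zero_eq_min w u v, ?_⟩
  rintro i hi u - v -
  obtain ⟨k, rfl⟩ := Nat.exists_eq_add_of_le' hi
  exact dSk_succ_eq w hS hdis k u v
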